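/- Let P_{A,E} be a normalized joint distribution on 𝒜 × ℰ, let R ≥ H(A|E|P_{A,E}), and let P(n) be a polynomial with P(n) ≥ 1 for all positive integers n. Then lim_{n→∞} (1/n)·Δ̲_{I,min}(⌈e^{nR}⌉, P(n) | P_{A,E}^n) = R − H(A|E|P_{A,E}). -/

import Mathlib

/-!
A typical-set argument. Call a sequence `(a, e)` of length `n` typical if its total conditional
information `∑ᵢ -log P(aᵢ|eᵢ)` lies within `t = nδ` of `n H(A|E)`; by Chebyshev's inequality the
typical set carries `Pⁿ`-mass at least `1 - n V / t²`, where `V` is the variance of the conditional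
information.

Restricting `Pⁿ` to the typical set gives a candidate at `ℓ¹`-distance `O(1/n)` whose ratio to the
marginal is at most `e^{t - nH}`, so `Δ̲ ≤ n (R - H + δ) + o(n)`. Conversely, a candidate `P'` with
`e^{-H_min} ≥ e^{-(nH + 2t)}` pays `log M - nH - 2t` in the logarithmic term, while one with smaller
`e^{-H_min}` puts mass at most `e^{-t}` on the typical set, so its `ℓ¹`-distance to `Pⁿ` is nearly
`1` and the `η` term costs nearly `log M ≈ nR`. A polynomial `ε` only adds `O(log n)`.
-/

open Real Finset Filter

attribute [local instance] Classical.propDecidable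

namespace Hayashi

def IsSubDist {S : Type*} [Fintype S] (P : S → ℝ) : Prop :=
  (∀ x, 0 ≤ P x) ∧ ∑ x, P x ≤ 1

def IsDist {S : Type*} [Fintype S] (P : S → ℝ) : Prop :=
  (∀ x, 0 ≤ P x) ∧ ∑ x, P x = 1

variable {A E : Type*} [Fintype A] [Fintype E]

noncomputable def margE (P : A × E → ℝ) (e : E) : ℝ := ∑ a, P (a, e)

noncomputable def margNorm (P : A × E → ℝ) (e : E) : ℝ := margE P e / ∑ e', margE P e'

noncomputable def l1 (P P' : A × E → ℝ) : ℝ := ∑ a, ∑ e, |P (a, e) - P' (a, e)|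

noncomputable def eta (x y : ℝ) : ℝ := -x * Real.log x + x * y

noncomputable def condRenyi (P : A × E → ℝ) (Q : E → ℝ) (s : ℝ) : ℝ :=
  (-1 / s) * Real.log (∑ a, ∑ e, P (a, e) ^ (1 + s) * Q e ^ (-s))

noncomputable def condRenyiUp (P : A × E → ℝ) (s : ℝ) : ℝ :=
  sSup {x | ∃ Q : E → ℝ, IsDist Q ∧ (∀ e, 0 < Q e) ∧ x = condRenyi P Q s}

noncomputable def condRenyiDown (P : A × E → ℝ) (s : ℝ) : ℝ :=
  condRenyi P (margNorm P) s

noncomputable def condEnt (P : A × E → ℝ) : ℝ :=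
  -∑ a, ∑ e, P (a, e) * Real.log (P (a, e) / margE P e)

noncomputable def H2cond (P : A × E → ℝ) (Q : E → ℝ) : ℝ :=
  -Real.log (∑ a, ∑ e, P (a, e) ^ 2 / Q e)

noncomputable def d2cond (P : A × E → ℝ) (Q : E → ℝ) : ℝ :=
  ∑ a, ∑ e, (P (a, e) - margE P e / (Fintype.card A : ℝ)) ^ 2 / Q e

noncomputable def d1' (P : A × E → ℝ) : ℝ :=
  ∑ a, ∑ e, |P (a, e) - margE P e / (Fintype.card A : ℝ)|

noncomputable def Iprime (P : A × E → ℝ) : ℝ :=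
  ∑ a, ∑ e, P (a, e) * Real.log (P (a, e) * (Fintype.card A : ℝ) / margE P e)

noncomputable def Hmin (P : A × E → ℝ) (Q : E → ℝ) : ℝ :=
  -Real.log (sSup {r | ∃ a e, 0 < Q e ∧ r = P (a, e) / Q e})

noncomputable def D2div {E : Type*} [Fintype E] (P Q : E → ℝ) : ℝ :=
  Real.log (∑ e, P e ^ 2 / Q e)

noncomputable def pushHash {B : Type*} (f : A → B) (P : A × E → ℝ) : B × E → ℝ :=
  fun be => ∑ a, (if f a = be.1 then P (a, be.2) else 0)

noncomputable def Delta_d2 (M ε : ℝ) (P : A × E → ℝ) : ℝ :=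
  sInf {x | ∃ (Q : E → ℝ) (P' : A × E → ℝ), IsDist Q ∧ (∀ e, 0 < Q e) ∧ IsSubDist P' ∧
    x = 2 * l1 P P' + Real.sqrt ε * Real.sqrt M * Real.exp (-H2cond P' Q / 2)}

noncomputable def Delta_I2 (M ε : ℝ) (P : A × E → ℝ) : ℝ :=
  sInf {x | ∃ P' : A × E → ℝ, IsSubDist P' ∧ (∀ e, margE P' e ≤ margE P e) ∧
    x = eta (l1 P P') (Real.log M) + ε * M * Real.exp (-H2cond P' (margE P))}

noncomputable def Delta_dmin (M ε : ℝ) (P : A × E → ℝ) : ℝ :=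
  sInf {x | ∃ (Q : E → ℝ) (P' : A × E → ℝ), IsDist Q ∧ (∀ e, 0 < Q e) ∧ IsSubDist P' ∧
    x = 2 * l1 P P' + Real.sqrt ε * Real.sqrt M * Real.exp (-Hmin P' Q / 2)}

noncomputable def Delta_Imin (M ε : ℝ) (P : A × E → ℝ) : ℝ :=
  sInf {x | ∃ P' : A × E → ℝ, IsSubDist P' ∧ (∀ e, margE P' e ≤ margE P e) ∧
    x = eta (l1 P P') (Real.log M) + ε * M * Real.exp (-Hmin P' (margE P))}

noncomputable def DeltaBar_Imin (M ε : ℝ) (P : A × E → ℝ) : ℝ :=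
  sInf {x | ∃ P' : A × E → ℝ, IsSubDist P' ∧ (∀ e, margE P' e ≤ margE P e) ∧
    x = eta (l1 P P') (Real.log M) + Real.log (1 + ε * M * Real.exp (-Hmin P' (margE P)))}

noncomputable def Pn (P : A × E → ℝ) (n : ℕ) : (Fin n → A) × (Fin n → E) → ℝ :=
  fun ae => ∏ i, P (ae.1 i, ae.2 i)

section ProductWeights

variable {ι S : Type*} [Fintype ι] [DecidableEq ι] [Fintype S] {p : S → ℝ}

theorem sum_prod_mul_prod (p : S → ℝ) (f : ι → S → ℝ) :
    ∑ x : ι → S, (∏ i, p (x i)) * ∏ i, f i (x i) = ∏ i, ∑ s, p s * f i s := by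
  simp only [← Finset.prod_mul_distrib, Finset.prod_univ_sum, Fintype.piFinset_univ]

theorem sum_prod_eq_one (hp : ∑ s, p s = 1) : ∑ x : ι → S, ∏ i, p (x i) = 1 := by
  simpa [hp] using sum_prod_mul_prod (ι := ι) p fun _ _ => 1

theorem sum_prod_mul_apply (hp : ∑ s, p s = 1) (g : S → ℝ) (i : ι) :
    ∑ x : ι → S, (∏ j, p (x j)) * g (x i) = ∑ s, p s * g s := by
  have h := sum_prod_mul_prod p fun j s => if j = i then g s else 1
  simp only [Finset.prod_ite_eq', Finset.mem_univ, if_true] at h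
  rw [h, Finset.prod_eq_single i (fun j _ hj => by simp [hj, hp]) (by simp)]
  simp

theorem sum_prod_mul_apply_mul_apply (hp : ∑ s, p s = 1) (g h : S → ℝ) {i j : ι}
    (hij : i ≠ j) :
    ∑ x : ι → S, (∏ k, p (x k)) * (g (x i) * h (x j)) =
      (∑ s, p s * g s) * ∑ s, p s * h s := by
  have H := sum_prod_mul_prod p fun k s => (if k = i then g s else 1) * (if k = j then h s else 1)
  simp only [Finset.prod_mul_distrib, Finset.prod_ite_eq', Finset.mem_univ, if_true] at H
  rw [H]
  have factor (k : ι) : ∑ s, p s * ((if k = i then g s else 1) * if k = j then h s else 1) =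
      (if k = i then ∑ s, p s * g s else 1) * if k = j then ∑ s, p s * h s else 1 := by
    by_cases hki : k = i
    · subst hki; simp [hij]
    · by_cases hkj : k = j
      · subst hkj; simp [hki]
      · simp [hki, hkj, hp]
  simp only [factor, Finset.prod_mul_distrib, Finset.prod_ite_eq', Finset.mem_univ, if_true]

theorem sum_prod_mul_sum_sq (hp : ∑ s, p s = 1) {Y : S → ℝ} (hY : ∑ s, p s * Y s = 0) :
    ∑ x : ι → S, (∏ i, p (x i)) * (∑ i, Y (x i)) ^ 2 = Fintype.card ι * ∑ s, p s * Y s ^ 2 := by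
  have pair (i j : ι) : ∑ x : ι → S, (∏ k, p (x k)) * (Y (x i) * Y (x j)) =
      if i = j then ∑ s, p s * Y s ^ 2 else 0 := by
    split_ifs with hij
    · subst hij
      simp only [← sq]
      exact sum_prod_mul_apply hp (fun s => Y s ^ 2) i
    · rw [sum_prod_mul_apply_mul_apply hp Y Y hij, hY, zero_mul]
  calc ∑ x : ι → S, (∏ k, p (x k)) * (∑ i, Y (x i)) ^ 2
      = ∑ i, ∑ j, ∑ x : ι → S, (∏ k, p (x k)) * (Y (x i) * Y (x j)) := by
        simp_rw [sq, Finset.sum_mul_sum, Finset.mul_sum]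
        rw [Finset.sum_comm]
        exact Finset.sum_congr rfl fun i _ => Finset.sum_comm
    _ = Fintype.card ι * ∑ s, p s * Y s ^ 2 := by
        simp [pair]

theorem one_sub_le_sum_filter_abs_sum_le (hp0 : ∀ s, 0 ≤ p s) (hp : ∑ s, p s = 1) {Y : S → ℝ}
    (hY : ∑ s, p s * Y s = 0) {t : ℝ} (ht : 0 < t) :
    1 - Fintype.card ι * (∑ s, p s * Y s ^ 2) / t ^ 2 ≤
      ∑ x : ι → S with |∑ i, Y (x i)| ≤ t, ∏ i, p (x i) := by
  set w : (ι → S) → ℝ := fun x => ∏ i, p (x i)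
  set Z : (ι → S) → ℝ := fun x => ∑ i, Y (x i)
  have hw (x) : 0 ≤ w x := Finset.prod_nonneg fun i _ => hp0 _
  have markov : ∑ x with ¬ |Z x| ≤ t, w x ≤ ∑ x, w x * Z x ^ 2 / t ^ 2 := calc
    _ ≤ ∑ x with ¬ |Z x| ≤ t, w x * Z x ^ 2 / t ^ 2 := by
      refine Finset.sum_le_sum fun x hx => ?_
      have hZ : t ^ 2 ≤ Z x ^ 2 := by
        rw [← sq_abs (Z x)]
        exact pow_le_pow_left₀ ht.le (not_le.1 (Finset.mem_filter.1 hx).2).le 2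
      rw [le_div_iff₀ (by positivity)]
      exact mul_le_mul_of_nonneg_left hZ (hw x)
    _ ≤ _ := Finset.sum_le_sum_of_subset_of_nonneg (Finset.filter_subset _ _)
        fun x _ _ => by have := hw x; positivity
  have split := Finset.sum_filter_add_sum_filter_not Finset.univ (fun x => |Z x| ≤ t) w
  rw [sum_prod_eq_one hp] at split
  rw [← Finset.sum_div, sum_prod_mul_sum_sq hp hY] at markov
  linarith

end ProductWeights

section JointDistributions

theorem IsDist.isSubDist {S : Type*} [Fintype S] {Q : S → ℝ} (hQ : IsDist Q) : IsSubDist Q :=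
  ⟨hQ.1, hQ.2.le⟩

variable {A E : Type*} [Fintype A] {P P' : A × E → ℝ}

theorem margE_nonneg (hP : ∀ p, 0 ≤ P p) (e : E) : 0 ≤ margE P e :=
  Finset.sum_nonneg fun a _ => hP (a, e)

theorem le_margE (hP : ∀ p, 0 ≤ P p) (a : A) (e : E) : P (a, e) ≤ margE P e :=
  Finset.single_le_sum (fun a _ => hP (a, e)) (Finset.mem_univ a)

noncomputable def condInfo (P : A × E → ℝ) (p : A × E) : ℝ :=
  Real.log (margE P p.2) - Real.log (P p)

theorem condInfo_nonneg (hP : ∀ p, 0 ≤ P p) {p : A × E} (hp : 0 < P p) : 0 ≤ condInfo P p :=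
  sub_nonneg.2 (Real.log_le_log hp (le_margE hP p.1 p.2))

theorem exp_neg_condInfo (hP : ∀ p, 0 ≤ P p) {p : A × E} (hp : 0 < P p) :
    Real.exp (-condInfo P p) = P p / margE P p.2 := by
  have hm : 0 < margE P p.2 := hp.trans_le (le_margE hP p.1 p.2)
  rw [condInfo, neg_sub, ← Real.log_div hp.ne' hm.ne', Real.exp_log (div_pos hp hm)]

variable [Fintype E]

theorem l1_eq_sum (P P' : A × E → ℝ) : l1 P P' = ∑ p, |P p - P' p| := by
  rw [l1, Fintype.sum_prod_type]

theorem l1_nonneg (P P' : A × E → ℝ) : 0 ≤ l1 P P' := by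
  rw [l1_eq_sum]
  exact Finset.sum_nonneg fun p _ => abs_nonneg _

theorem l1_le_two (hP : IsSubDist P) (hP' : IsSubDist P') : l1 P P' ≤ 2 := calc
  l1 P P' ≤ ∑ p, (P p + P' p) := by
    rw [l1_eq_sum]
    refine Finset.sum_le_sum fun p _ => ?_
    rw [abs_le]
    constructor <;> linarith [hP.1 p, hP'.1 p]
  _ ≤ 2 := by
    rw [Finset.sum_add_distrib]
    linarith [hP.2, hP'.2]

theorem sum_mul_condInfo (hP : ∀ p, 0 ≤ P p) : ∑ p, P p * condInfo P p = condEnt P := by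
  rw [condEnt, ← Fintype.sum_prod_type', ← Finset.sum_neg_distrib]
  refine Finset.sum_congr rfl fun p _ => ?_
  rcases (hP p).eq_or_lt with hp | hp
  · simp [← hp]
  · have hm : 0 < margE P p.2 := hp.trans_le (le_margE hP p.1 p.2)
    rw [condInfo, Real.log_div hp.ne' hm.ne']
    ring

theorem condEnt_nonneg (hP : ∀ p, 0 ≤ P p) : 0 ≤ condEnt P := by
  rw [← sum_mul_condInfo hP]
  refine Finset.sum_nonneg fun p _ => ?_
  rcases (hP p).eq_or_lt with hp | hp
  · simp [← hp]
  · exact mul_nonneg hp.le (condInfo_nonneg hP hp)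

noncomputable def condInfoVar (P : A × E → ℝ) : ℝ :=
  ∑ p, P p * (condInfo P p - condEnt P) ^ 2

theorem condInfoVar_nonneg (hP : ∀ p, 0 ≤ P p) : 0 ≤ condInfoVar P :=
  Finset.sum_nonneg fun p _ => mul_nonneg (hP p) (sq_nonneg _)

theorem sum_mul_condInfo_sub_condEnt (hP : IsDist P) :
    ∑ p, P p * (condInfo P p - condEnt P) = 0 := by
  simp only [mul_sub, Finset.sum_sub_distrib, sum_mul_condInfo hP.1, ← Finset.sum_mul, hP.2,
    one_mul, sub_self]

end JointDistributions

section IidExtension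

theorem sum_prod_arrow_eq_sum_arrow_prod {ι α β : Type*} [Fintype ι] [DecidableEq ι]
    [Fintype α] [Fintype β] (F : (ι → α) × (ι → β) → ℝ) :
    ∑ ab, F ab = ∑ x : ι → α × β, F (fun i => (x i).1, fun i => (x i).2) :=
  (Fintype.sum_equiv (Equiv.arrowProdEquivProdArrow _ _ _) _ _ fun _ => rfl).symm

variable {A E : Type*} {P : A × E → ℝ} {n : ℕ}

theorem Pn_nonneg (hP : ∀ p, 0 ≤ P p) (ae : (Fin n → A) × (Fin n → E)) : 0 ≤ Pn P n ae :=
  Finset.prod_nonneg fun _ _ => hP _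

variable [Fintype A]

theorem margE_Pn (P : A × E → ℝ) (n : ℕ) (e : Fin n → E) :
    margE (Pn P n) e = ∏ i, margE P (e i) :=
  (Fintype.prod_sum fun i a => P (a, e i)).symm

variable [Fintype E]

noncomputable def condInfoDev (P : A × E → ℝ) (n : ℕ) (ae : (Fin n → A) × (Fin n → E)) : ℝ :=
  ∑ i, (condInfo P (ae.1 i, ae.2 i) - condEnt P)

theorem Pn_eq_margE_mul_exp (hP : ∀ p, 0 ≤ P p) {ae : (Fin n → A) × (Fin n → E)}
    (h : Pn P n ae ≠ 0) :
    Pn P n ae = margE (Pn P n) ae.2 * Real.exp (-(condInfoDev P n ae + n * condEnt P)) := by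
  have hpos (i : Fin n) : 0 < P (ae.1 i, ae.2 i) :=
    (hP _).lt_of_ne fun h0 => h (Finset.prod_eq_zero (Finset.mem_univ i) h0.symm)
  have hsum : condInfoDev P n ae + n * condEnt P = ∑ i, condInfo P (ae.1 i, ae.2 i) := by
    simp [condInfoDev, Finset.sum_sub_distrib]
  rw [hsum, ← Finset.sum_neg_distrib, Real.exp_sum, margE_Pn, ← Finset.prod_mul_distrib]
  refine Finset.prod_congr rfl fun i _ => ?_
  rw [exp_neg_condInfo hP (hpos i), mul_div_cancel₀]
  exact ((hpos i).trans_le (le_margE hP _ _)).ne'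

theorem isDist_Pn (hP : IsDist P) (n : ℕ) : IsDist (Pn P n) :=
  ⟨Pn_nonneg hP.1, by
    rw [sum_prod_arrow_eq_sum_arrow_prod]
    exact sum_prod_eq_one hP.2⟩

-- Off the support of `Pⁿ`, `condInfoDev` is a junk value (`Real.log 0 = 0`).
noncomputable def typicalSet (P : A × E → ℝ) (n : ℕ) (t : ℝ) :
    Finset ((Fin n → A) × (Fin n → E)) :=
  Finset.univ.filter fun ae => |condInfoDev P n ae| ≤ t ∧ Pn P n ae ≠ 0

theorem one_sub_le_sum_typicalSet (hP : IsDist P) {t : ℝ} (ht : 0 < t) :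
    1 - n * condInfoVar P / t ^ 2 ≤ ∑ ae ∈ typicalSet P n t, Pn P n ae := by
  have cheb := one_sub_le_sum_filter_abs_sum_le (ι := Fin n) hP.1 hP.2
    (sum_mul_condInfo_sub_condEnt hP) ht
  rw [Fintype.card_fin] at cheb
  rw [typicalSet, ← Finset.filter_filter, Finset.sum_filter_ne_zero, Finset.sum_filter,
    sum_prod_arrow_eq_sum_arrow_prod]
  simpa [Finset.sum_filter, condInfoDev, Pn, condInfoVar] using cheb

theorem Pn_le_of_mem_typicalSet (hP : ∀ p, 0 ≤ P p) {t : ℝ} {ae : (Fin n → A) × (Fin n → E)}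
    (h : ae ∈ typicalSet P n t) :
    Pn P n ae ≤ Real.exp (t - n * condEnt P) * margE (Pn P n) ae.2 := by
  rw [typicalSet, Finset.mem_filter] at h
  rw [Pn_eq_margE_mul_exp hP h.2.2, mul_comm]
  gcongr
  · exact margE_nonneg (Pn_nonneg hP) _
  · linarith [neg_abs_le (condInfoDev P n ae), h.2.1]

theorem margE_le_of_mem_typicalSet (hP : ∀ p, 0 ≤ P p) {t : ℝ}
    {ae : (Fin n → A) × (Fin n → E)} (h : ae ∈ typicalSet P n t) :
    margE (Pn P n) ae.2 ≤ Real.exp (t + n * condEnt P) * Pn P n ae := by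
  rw [typicalSet, Finset.mem_filter] at h
  have hPn := Pn_eq_margE_mul_exp hP h.2.2
  calc margE (Pn P n) ae.2
      = Pn P n ae * Real.exp (condInfoDev P n ae + n * condEnt P) := by
        rw [hPn, mul_assoc, ← Real.exp_add, neg_add_cancel, Real.exp_zero, mul_one]
    _ ≤ _ := by
        rw [mul_comm]
        gcongr
        · exact Pn_nonneg hP ae
        · linarith [le_abs_self (condInfoDev P n ae), h.2.1]

end IidExtension

theorem eta_le_one_add_mul {x : ℝ} (hx : 0 ≤ x) (y : ℝ) : eta x y ≤ 1 + x * y := by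
  have := Real.negMulLog_le_one_sub_self hx
  rw [Real.negMulLog] at this
  rw [eta]
  linarith

theorem mul_sub_two_mul_log_two_le_eta {x : ℝ} (h0 : 0 ≤ x) (h2 : x ≤ 2) (y : ℝ) :
    x * y - 2 * Real.log 2 ≤ eta x y := by
  have hlog : x * Real.log x ≤ 2 * Real.log 2 := by
    rcases h0.eq_or_lt with rfl | hx
    · simp [Real.log_nonneg one_le_two]
    · calc x * Real.log x ≤ x * Real.log 2 := by gcongr
        _ ≤ 2 * Real.log 2 := by gcongr
  rw [eta]
  linarith

theorem log_one_add_mul_le {ε x y : ℝ} (hε : 0 ≤ ε) (hx : 0 ≤ x) (hxy : x ≤ y) (hy : 1 ≤ y) :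
    Real.log (1 + ε * x) ≤ Real.log (1 + ε) + Real.log y := by
  rw [← Real.log_mul (by positivity) (by positivity)]
  exact Real.log_le_log (by positivity) (by nlinarith)

section MinEntropy

variable {A E : Type*} [Fintype A] [Fintype E] {P P' : A × E → ℝ} {Q : E → ℝ}

theorem bddAbove_ratios (P' : A × E → ℝ) (Q : E → ℝ) :
    BddAbove {r | ∃ a e, 0 < Q e ∧ r = P' (a, e) / Q e} :=
  ((Set.finite_range fun p : A × E => P' p / Q p.2).subset
    (by rintro r ⟨a, e, -, rfl⟩; exact ⟨(a, e), rfl⟩)).bddAbove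

theorem exp_neg_Hmin_eq_sSup (h : ∃ a e, 0 < Q e ∧ 0 < P' (a, e)) :
    Real.exp (-Hmin P' Q) = sSup {r | ∃ a e, 0 < Q e ∧ r = P' (a, e) / Q e} := by
  obtain ⟨a, e, hQ, hP'⟩ := h
  rw [Hmin, neg_neg, Real.exp_log]
  exact (div_pos hP' hQ).trans_le (le_csSup (bddAbove_ratios P' Q) ⟨a, e, hQ, rfl⟩)

theorem le_exp_neg_Hmin_mul (hP' : ∀ p, 0 ≤ P' p) (hQ : ∀ e, margE P' e ≤ Q e) (a : A) (e : E) :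
    P' (a, e) ≤ Real.exp (-Hmin P' Q) * Q e := by
  rcases (hP' (a, e)).eq_or_lt with h0 | hpos
  · rw [← h0]
    exact mul_nonneg (Real.exp_nonneg _) ((margE_nonneg hP' e).trans (hQ e))
  have hQe : 0 < Q e := hpos.trans_le ((le_margE hP' a e).trans (hQ e))
  rw [exp_neg_Hmin_eq_sSup ⟨a, e, hQe, hpos⟩, ← div_le_iff₀ hQe]
  exact le_csSup (bddAbove_ratios P' Q) ⟨a, e, hQe, rfl⟩

theorem exp_neg_Hmin_le {c : ℝ} (hle : ∀ a e, 0 < Q e → P' (a, e) / Q e ≤ c)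
    (hpos : ∃ a e, 0 < Q e ∧ 0 < P' (a, e)) : Real.exp (-Hmin P' Q) ≤ c := by
  obtain ⟨a, e, hQ, hP'⟩ := hpos
  rw [exp_neg_Hmin_eq_sSup ⟨a, e, hQ, hP'⟩]
  exact csSup_le ⟨_, a, e, hQ, rfl⟩ fun r ⟨a', e', hQ', hr⟩ => hr ▸ hle a' e' hQ'

end MinEntropy

section DeltaBarImin

variable {A E : Type*} [Fintype A] [Fintype E] {P P' : A × E → ℝ}

theorem DeltaBar_Imin_le {M ε : ℝ} (hP : IsSubDist P) (hM : 1 ≤ M) (hε : 0 ≤ ε)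
    (hP' : IsSubDist P') (hmarg : ∀ e, margE P' e ≤ margE P e) :
    DeltaBar_Imin M ε P ≤
      eta (l1 P P') (Real.log M) + Real.log (1 + ε * M * Real.exp (-Hmin P' (margE P))) := by
  refine csInf_le ⟨-(2 * Real.log 2), ?_⟩ ⟨P', hP', hmarg, rfl⟩
  rintro x ⟨P'', hP'', -, rfl⟩
  have heta := mul_sub_two_mul_log_two_le_eta (l1_nonneg P P'') (l1_le_two hP hP'') (Real.log M)
  have hl1M : 0 ≤ l1 P P'' * Real.log M := mul_nonneg (l1_nonneg P P'') (Real.log_nonneg hM)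
  have hlog : 0 ≤ Real.log (1 + ε * M * Real.exp (-Hmin P'' (margE P))) :=
    Real.log_nonneg (le_add_of_nonneg_right (by positivity))
  linarith

theorem le_DeltaBar_Imin {M ε c : ℝ} (hP : IsSubDist P)
    (h : ∀ P', IsSubDist P' → (∀ e, margE P' e ≤ margE P e) →
      c ≤ eta (l1 P P') (Real.log M) + Real.log (1 + ε * M * Real.exp (-Hmin P' (margE P)))) :
    c ≤ DeltaBar_Imin M ε P :=
  le_csInf ⟨_, P, hP, fun _ => le_rfl, rfl⟩ fun _ ⟨P', hP', hmarg, hx⟩ => hx ▸ h P' hP' hmarg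

end DeltaBarImin

section TypicalSetBounds

variable {A E : Type*} [Fintype A] [Fintype E] {P : A × E → ℝ} {n : ℕ}

theorem sum_sub_sum_le_l1 (P P' : A × E → ℝ) (T : Finset (A × E)) :
    ∑ p ∈ T, P p - ∑ p ∈ T, P' p ≤ l1 P P' := by
  rw [l1_eq_sum, ← Finset.sum_sub_distrib]
  exact (Finset.sum_le_sum fun p _ => le_abs_self _).trans
    (Finset.sum_le_sum_of_subset_of_nonneg (Finset.subset_univ T) fun p _ _ => abs_nonneg _)

theorem sum_typicalSet_le (hP : IsDist P) {P' : (Fin n → A) × (Fin n → E) → ℝ}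
    (hP' : ∀ ae, 0 ≤ P' ae) (hmarg : ∀ e, margE P' e ≤ margE (Pn P n) e) (t : ℝ) :
    ∑ ae ∈ typicalSet P n t, P' ae ≤
      Real.exp (-Hmin P' (margE (Pn P n))) * Real.exp (t + n * condEnt P) := by
  set c := Real.exp (-Hmin P' (margE (Pn P n))) * Real.exp (t + n * condEnt P)
  calc ∑ ae ∈ typicalSet P n t, P' ae ≤ ∑ ae ∈ typicalSet P n t, c * Pn P n ae := by
        refine Finset.sum_le_sum fun ae hae => ?_
        calc P' ae ≤ Real.exp (-Hmin P' (margE (Pn P n))) * margE (Pn P n) ae.2 :=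
              le_exp_neg_Hmin_mul hP' hmarg ae.1 ae.2
          _ ≤ _ := by
              rw [mul_assoc]
              gcongr
              exact margE_le_of_mem_typicalSet hP.1 hae
    _ ≤ c := by
        rw [← Finset.mul_sum]
        refine mul_le_of_le_one_right (by positivity) ?_
        exact (Finset.sum_le_sum_of_subset_of_nonneg (Finset.subset_univ _)
          fun ae _ _ => Pn_nonneg hP.1 ae).trans (isDist_Pn hP n).2.le

noncomputable def typicalPart (P : A × E → ℝ) (n : ℕ) (t : ℝ) :
    (Fin n → A) × (Fin n → E) → ℝ :=
  fun ae => if ae ∈ typicalSet P n t then Pn P n ae else 0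

theorem typicalPart_nonneg (hP : ∀ p, 0 ≤ P p) {t : ℝ} (ae : (Fin n → A) × (Fin n → E)) :
    0 ≤ typicalPart P n t ae := by
  unfold typicalPart
  split_ifs
  exacts [Pn_nonneg hP ae, le_rfl]

theorem typicalPart_le_Pn (hP : ∀ p, 0 ≤ P p) {t : ℝ} (ae : (Fin n → A) × (Fin n → E)) :
    typicalPart P n t ae ≤ Pn P n ae := by
  unfold typicalPart
  split_ifs
  exacts [le_rfl, Pn_nonneg hP ae]

theorem margE_typicalPart_le (hP : ∀ p, 0 ≤ P p) {t : ℝ} (e : Fin n → E) :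
    margE (typicalPart P n t) e ≤ margE (Pn P n) e :=
  Finset.sum_le_sum fun a _ => typicalPart_le_Pn hP (a, e)

theorem sum_typicalPart (P : A × E → ℝ) (n : ℕ) (t : ℝ) :
    ∑ ae, typicalPart P n t ae = ∑ ae ∈ typicalSet P n t, Pn P n ae := by
  simp only [typicalPart, Finset.sum_ite_mem, Finset.univ_inter]

theorem isSubDist_typicalPart (hP : IsDist P) {t : ℝ} : IsSubDist (typicalPart P n t) :=
  ⟨typicalPart_nonneg hP.1,
    (Finset.sum_le_sum fun ae _ => typicalPart_le_Pn hP.1 ae).trans (isDist_Pn hP n).2.le⟩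

theorem l1_Pn_typicalPart (hP : IsDist P) {t : ℝ} :
    l1 (Pn P n) (typicalPart P n t) = 1 - ∑ ae ∈ typicalSet P n t, Pn P n ae := by
  rw [l1_eq_sum, Finset.sum_congr rfl fun ae _ =>
      abs_of_nonneg (sub_nonneg.2 (typicalPart_le_Pn hP.1 ae)),
    Finset.sum_sub_distrib, sum_typicalPart, (isDist_Pn hP n).2]

theorem exp_neg_Hmin_typicalPart_le (hP : IsDist P) {t : ℝ}
    (hT : 0 < ∑ ae ∈ typicalSet P n t, Pn P n ae) :
    Real.exp (-Hmin (typicalPart P n t) (margE (Pn P n))) ≤ Real.exp (t - n * condEnt P) := by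
  refine exp_neg_Hmin_le (fun a e he => ?_) ?_
  · by_cases h : (a, e) ∈ typicalSet P n t
    · simpa [typicalPart, h, div_le_iff₀ he] using Pn_le_of_mem_typicalSet hP.1 h
    · simpa [typicalPart, h] using (Real.exp_pos _).le
  · obtain ⟨ae, hae⟩ := Finset.nonempty_of_sum_ne_zero hT.ne'
    have hpos : 0 < Pn P n ae := (Pn_nonneg hP.1 ae).lt_of_ne' (Finset.mem_filter.1 hae).2.2
    refine ⟨ae.1, ae.2, hpos.trans_le (le_margE (Pn_nonneg hP.1) ae.1 ae.2), ?_⟩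
    simpa [typicalPart, hae] using hpos

end TypicalSetBounds

section Bounds

variable {A E : Type*} [Fintype A] [Fintype E] {P : A × E → ℝ} {n : ℕ}

theorem DeltaBar_Imin_Pn_le (hP : IsDist P) {M ε t : ℝ} (hM : 1 ≤ M) (hε : 0 ≤ ε) (ht : 0 < t)
    (hα : n * condInfoVar P / t ^ 2 < 1) (hMt : n * condEnt P - t ≤ Real.log M) :
    DeltaBar_Imin M ε (Pn P n) ≤
      1 + Real.log (1 + ε) + (1 + n * condInfoVar P / t ^ 2) * Real.log M
        - (n * condEnt P - t) := by
  set α := n * condInfoVar P / t ^ 2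
  have hmass : 1 - α ≤ ∑ ae ∈ typicalSet P n t, Pn P n ae := one_sub_le_sum_typicalSet hP ht
  have hl1 : l1 (Pn P n) (typicalPart P n t) ≤ α := by
    rw [l1_Pn_typicalPart hP]
    linarith
  have hβ := exp_neg_Hmin_typicalPart_le hP (t := t) (by linarith)
  have hMβ : 1 ≤ M * Real.exp (t - n * condEnt P) := by
    rw [← Real.exp_log (zero_lt_one.trans_le hM), ← Real.exp_add]
    exact Real.one_le_exp (by linarith)
  have hlog := log_one_add_mul_le (x := M * Real.exp (-Hmin (typicalPart P n t) (margE (Pn P n))))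
    hε (by positivity) (by gcongr) hMβ
  rw [← mul_assoc] at hlog
  rw [Real.log_mul (by positivity) (Real.exp_pos _).ne', Real.log_exp] at hlog
  have heta : eta (l1 (Pn P n) (typicalPart P n t)) (Real.log M) ≤ 1 + α * Real.log M :=
    (eta_le_one_add_mul (l1_nonneg _ _) _).trans (by gcongr; exact Real.log_nonneg hM)
  calc DeltaBar_Imin M ε (Pn P n)
      ≤ eta (l1 (Pn P n) (typicalPart P n t)) (Real.log M) + Real.log
          (1 + ε * M * Real.exp (-Hmin (typicalPart P n t) (margE (Pn P n)))) :=
        DeltaBar_Imin_le (isDist_Pn hP n).isSubDist hM hε (isSubDist_typicalPart hP)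
          (margE_typicalPart_le hP.1)
    _ ≤ _ := by linarith

theorem le_DeltaBar_Imin_Pn (hP : IsDist P) {M ε t : ℝ} (hM : 1 ≤ M) (hε : 1 ≤ ε) (ht : 0 < t) :
    (1 - n * condInfoVar P / t ^ 2 - Real.exp (-t)) * Real.log M - n * condEnt P - 2 * t
      - 2 * Real.log 2 ≤ DeltaBar_Imin M ε (Pn P n) := by
  set α := n * condInfoVar P / t ^ 2
  set H := condEnt P
  have hα : 0 ≤ α := by have := condInfoVar_nonneg hP.1; positivity
  have hH : 0 ≤ n * H := mul_nonneg n.cast_nonneg (condEnt_nonneg hP.1)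
  have hlogM : 0 ≤ Real.log M := Real.log_nonneg hM
  refine le_DeltaBar_Imin (isDist_Pn hP n).isSubDist fun P' hP' hmarg => ?_
  set β := Real.exp (-Hmin P' (margE (Pn P n)))
  have heta := mul_sub_two_mul_log_two_le_eta (l1_nonneg _ _)
    (l1_le_two (isDist_Pn hP n).isSubDist hP') (Real.log M)
  have hl1M : 0 ≤ l1 (Pn P n) P' * Real.log M := mul_nonneg (l1_nonneg _ _) hlogM
  have hlog0 : 0 ≤ Real.log (1 + ε * M * β) :=
    Real.log_nonneg (le_add_of_nonneg_right (by positivity))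
  rcases le_or_gt (Real.exp (-(n * H + 2 * t))) β with hβ | hβ
  · have hlog : Real.log M - (n * H + 2 * t) ≤ Real.log (1 + ε * M * β) := calc
      _ = Real.log (M * Real.exp (-(n * H + 2 * t))) := by
          rw [Real.log_mul (by positivity) (Real.exp_pos _).ne', Real.log_exp]; ring
      _ ≤ _ := by
          refine Real.log_le_log (by positivity) ?_
          have hMβ : 0 ≤ M * β := by positivity
          calc M * Real.exp (-(n * H + 2 * t)) ≤ M * β := by gcongr
            _ ≤ ε * M * β := by nlinarith
            _ ≤ _ := by linarith
    have : (1 - α - Real.exp (-t)) * Real.log M ≤ Real.log M := by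
      nlinarith [Real.exp_pos (-t)]
    linarith
  · have hmassP' : ∑ ae ∈ typicalSet P n t, P' ae < Real.exp (-t) := calc
      _ ≤ β * Real.exp (t + n * H) := sum_typicalSet_le hP hP'.1 hmarg t
      _ < Real.exp (-(n * H + 2 * t)) * Real.exp (t + n * H) := by gcongr
      _ = Real.exp (-t) := by rw [← Real.exp_add]; ring_nf
    have hl1 : 1 - α - Real.exp (-t) ≤ l1 (Pn P n) P' := by
      linarith [one_sub_le_sum_typicalSet (n := n) hP ht,
        sum_sub_sum_le_l1 (Pn P n) P' (typicalSet P n t)]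
    nlinarith [mul_le_mul_of_nonneg_right hl1 hlogM]

end Bounds

theorem one_le_natCeil_exp (x : ℝ) : (1 : ℝ) ≤ ⌈Real.exp x⌉₊ :=
  Nat.one_le_cast.2 (Nat.ceil_pos.2 (Real.exp_pos x))

theorem le_log_natCeil_exp (x : ℝ) : x ≤ Real.log ⌈Real.exp x⌉₊ :=
  (Real.le_log_iff_exp_le (zero_lt_one.trans_le (one_le_natCeil_exp x))).2 (Nat.le_ceil _)

theorem log_natCeil_exp_le {x : ℝ} (hx : 0 ≤ x) : Real.log ⌈Real.exp x⌉₊ ≤ x + Real.log 2 := by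
  rw [← Real.log_exp x, ← Real.log_mul (Real.exp_pos x).ne' two_ne_zero, Real.log_exp x]
  refine Real.log_le_log (zero_lt_one.trans_le (one_le_natCeil_exp x)) ?_
  linarith [Nat.ceil_lt_add_one (Real.exp_pos x).le, Real.one_le_exp hx]

theorem tendsto_log_natCeil_exp_div {R : ℝ} (hR : 0 ≤ R) :
    Tendsto (fun n : ℕ => Real.log ⌈Real.exp (n * R)⌉₊ / n) atTop (nhds R) := by
  have hupper : Tendsto (fun n : ℕ => R + Real.log 2 / n) atTop (nhds R) := by
    simpa only [add_zero] using
      tendsto_const_nhds.add (tendsto_const_div_atTop_nhds_zero_nat (Real.log 2))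
  refine tendsto_of_tendsto_of_tendsto_of_le_of_le' tendsto_const_nhds hupper ?_ ?_
  all_goals filter_upwards [eventually_gt_atTop 0] with n hn
  · rw [le_div_iff₀ (by positivity), mul_comm]
    exact le_log_natCeil_exp _
  · rw [div_le_iff₀ (by positivity), add_mul, div_mul_cancel₀ _ (by positivity), mul_comm]
    exact log_natCeil_exp_le (by positivity)

theorem tendsto_log_one_add_eval_div (Q : Polynomial ℝ)
    (hQ : ∀ᶠ n : ℕ in atTop, 0 ≤ Q.eval (n : ℝ)) :
    Tendsto (fun n : ℕ => Real.log (1 + Q.eval (n : ℝ)) / n) atTop (nhds 0) := by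
  set d := Q.natDegree
  obtain ⟨c, hc⟩ := (Polynomial.isBigO_atTop_of_degree_le (P := Q) (Q := Polynomial.X ^ d)
    (by rw [Polynomial.degree_X_pow]; exact Polynomial.degree_le_natDegree)).bound
  set K := 1 + |c|
  have hlim : Tendsto (fun n : ℕ => (Real.log K + d * Real.log n) / n) atTop (nhds 0) := by
    have hlog : Tendsto (fun n : ℕ => Real.log n / n) atTop (nhds 0) :=
      Real.isLittleO_log_id_atTop.tendsto_div_nhds_zero.comp tendsto_natCast_atTop_atTop
    simpa [add_div, mul_div_assoc] using
      (tendsto_const_div_atTop_nhds_zero_nat (Real.log K)).add (hlog.const_mul (d : ℝ))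
  refine tendsto_of_tendsto_of_tendsto_of_le_of_le' tendsto_const_nhds hlim ?_ ?_
  · filter_upwards [hQ] with n hn
    exact div_nonneg (Real.log_nonneg (by linarith)) n.cast_nonneg
  · filter_upwards [hQ, tendsto_natCast_atTop_atTop.eventually hc, eventually_ge_atTop 1]
      with n hn hcn h1
    have hn1 : (1 : ℝ) ≤ n := by exact_mod_cast h1
    have hpow : (1 : ℝ) ≤ (n : ℝ) ^ d := one_le_pow₀ hn1
    simp only [Polynomial.eval_pow, Polynomial.eval_X, Real.norm_eq_abs, abs_pow,
      abs_of_nonneg (zero_le_one.trans hn1), abs_of_nonneg hn] at hcn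
    gcongr
    calc Real.log (1 + Q.eval (n : ℝ)) ≤ Real.log (K * (n : ℝ) ^ d) := by
          refine Real.log_le_log (by linarith) ?_
          nlinarith [le_abs_self c]
      _ = Real.log K + d * Real.log n := by
          rw [Real.log_mul (by positivity) (by positivity), Real.log_pow]

theorem tendsto_natCast_mul_div_mul_sq (V δ : ℝ) :
    Tendsto (fun n : ℕ => n * V / (n * δ) ^ 2) atTop (nhds 0) := by
  refine (tendsto_const_div_atTop_nhds_zero_nat (V / δ ^ 2)).congr' ?_
  filter_upwards [eventually_gt_atTop 0] with n hn
  have : (n : ℝ) ≠ 0 := by positivity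
  rw [mul_pow, sq (n : ℝ), mul_assoc, mul_div_mul_left _ _ this, div_div, mul_comm]

section Limit

variable {A E : Type*} [Fintype A] [Fintype E] {P : A × E → ℝ}

theorem eventually_lt_inv_mul_DeltaBar_Imin (hP : IsDist P) {R : ℝ} (hR : condEnt P ≤ R)
    {ε : ℕ → ℝ} (hε : ∀ᶠ n : ℕ in atTop, 1 ≤ ε n) {a : ℝ} (ha : a < R - condEnt P) :
    ∀ᶠ n : ℕ in atTop,
      a < 1 / (n : ℝ) * DeltaBar_Imin (⌈Real.exp (n * R)⌉₊ : ℝ) (ε n) (Pn P n) := by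
  set H := condEnt P
  set V := condInfoVar P
  obtain ⟨δ, hδ, hδa⟩ : ∃ δ > 0, a < R - H - 2 * δ := ⟨(R - H - a) / 4, by linarith, by linarith⟩
  have hR0 : 0 ≤ R := (condEnt_nonneg hP.1).trans hR
  have hexp : Tendsto (fun n : ℕ => Real.exp (-(n * δ))) atTop (nhds 0) :=
    Real.tendsto_exp_neg_atTop_nhds_zero.comp (tendsto_natCast_atTop_atTop.atTop_mul_const hδ)
  have hlim := ((((tendsto_const_nhds (x := (1 : ℝ))).sub (tendsto_natCast_mul_div_mul_sq V δ)).sub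
    hexp).mul (tendsto_log_natCeil_exp_div hR0)).sub_const (H + 2 * δ) |>.sub
    (tendsto_const_div_atTop_nhds_zero_nat (2 * Real.log 2))
  have hlt : a < (1 - 0 - 0) * R - (H + 2 * δ) - 0 := by linarith
  filter_upwards [hlim.eventually (lt_mem_nhds hlt), hε, eventually_gt_atTop 0]
    with n hlow hεn hn
  refine hlow.trans_le ?_
  have hn' : (0 : ℝ) < n := Nat.cast_pos.2 hn
  have hLB := le_DeltaBar_Imin_Pn (n := n) hP (one_le_natCeil_exp (n * R)) hεn (mul_pos hn' hδ)
  calc _ = 1 / (n : ℝ) * ((1 - n * V / (n * δ) ^ 2 - Real.exp (-(n * δ))) *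
        Real.log ⌈Real.exp (n * R)⌉₊ - n * H - 2 * (n * δ) - 2 * Real.log 2) := by
        field_simp
        ring
    _ ≤ _ := by gcongr

theorem eventually_inv_mul_DeltaBar_Imin_lt (hP : IsDist P) {R : ℝ} (hR : condEnt P ≤ R)
    {ε : ℕ → ℝ} (hε : ∀ᶠ n : ℕ in atTop, 0 ≤ ε n)
    (hεlim : Tendsto (fun n : ℕ => Real.log (1 + ε n) / n) atTop (nhds 0)) {b : ℝ}
    (hb : R - condEnt P < b) :
    ∀ᶠ n : ℕ in atTop,
      1 / (n : ℝ) * DeltaBar_Imin (⌈Real.exp (n * R)⌉₊ : ℝ) (ε n) (Pn P n) < b := by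
  set H := condEnt P
  set V := condInfoVar P
  obtain ⟨δ, hδ, hδb⟩ : ∃ δ > 0, R - H + δ < b := ⟨(b - (R - H)) / 2, by linarith, by linarith⟩
  have hR0 : 0 ≤ R := (condEnt_nonneg hP.1).trans hR
  have hα := tendsto_natCast_mul_div_mul_sq V δ
  have hlim := (((tendsto_const_div_atTop_nhds_zero_nat 1).add hεlim).add
    (((tendsto_const_nhds (x := (1 : ℝ))).add hα).mul (tendsto_log_natCeil_exp_div hR0))).sub_const
    (H - δ)
  have hlt : 0 + 0 + (1 + 0) * R - (H - δ) < b := by linarith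
  filter_upwards [hlim.eventually (gt_mem_nhds hlt), hα.eventually (gt_mem_nhds one_pos), hε,
    eventually_gt_atTop 0] with n hup hαn hεn hn
  refine lt_of_le_of_lt ?_ hup
  have hn' : (0 : ℝ) < n := Nat.cast_pos.2 hn
  have hMt : n * H - n * δ ≤ Real.log ⌈Real.exp (n * R)⌉₊ := by
    have := le_log_natCeil_exp (n * R)
    nlinarith
  have hUB := DeltaBar_Imin_Pn_le (n := n) hP (one_le_natCeil_exp (n * R)) hεn (mul_pos hn' hδ)
    hαn hMt
  calc _ ≤ 1 / (n : ℝ) * (1 + Real.log (1 + ε n) + (1 + n * V / (n * δ) ^ 2) *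
        Real.log ⌈Real.exp (n * R)⌉₊ - (n * H - n * δ)) := by gcongr
    _ = _ := by field_simp

end Limit

theorem statement18_general {A E : Type*} [Fintype A] [Fintype E]
    (P : A × E → ℝ) (hP : IsDist P) (R : ℝ) (hR : condEnt P ≤ R)
    (Pol : Polynomial ℝ) (hPol : ∀ n : ℕ, 0 < n → 1 ≤ Pol.eval (n : ℝ)) :
    Filter.Tendsto (fun n : ℕ =>
        (1 / (n : ℝ)) *
          DeltaBar_Imin ((⌈Real.exp (n * R)⌉₊ : ℝ)) (Pol.eval (n : ℝ)) (Pn P n))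
      Filter.atTop (nhds (R - condEnt P)) := by
  have hPol' : ∀ᶠ n : ℕ in atTop, 1 ≤ Pol.eval (n : ℝ) := (eventually_gt_atTop 0).mono hPol
  have hPol0 : ∀ᶠ n : ℕ in atTop, 0 ≤ Pol.eval (n : ℝ) := hPol'.mono fun _ h => zero_le_one.trans h
  exact tendsto_order.2 ⟨fun a ha => eventually_lt_inv_mul_DeltaBar_Imin hP hR hPol' ha,
    fun b hb => eventually_inv_mul_DeltaBar_Imin_lt hP hR hPol0
      (tendsto_log_one_add_eval_div Pol hPol0) hb⟩

/-- Theorem `t8-27-4` of the paper: for `R ≥ H(A|E|P)`, the equivocation-type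
bound `Δ̲_{I,min}(⌈e^{nR}⌉, P(n) | P^n)` grows linearly with rate exactly
`R - H(A|E|P)`. -/
theorem statement18 {A E : Type*} [Fintype A] [Fintype E] [Nonempty A] [Nonempty E]
    (P : A × E → ℝ) (hP : IsDist P) (R : ℝ) (hR : condEnt P ≤ R)
    (Pol : Polynomial ℝ) (hPol : ∀ n : ℕ, 0 < n → 1 ≤ Pol.eval (n : ℝ)) :
    Filter.Tendsto (fun n : ℕ =>
        (1 / (n : ℝ)) *
          DeltaBar_Imin ((⌈Real.exp (n * R)⌉₊ : ℝ)) (Pol.eval (n : ℝ)) (Pn P n))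
      Filter.atTop (nhds (R - condEnt P)) :=
  statement18_general P hP R hR Pol hPol

end Hayashi
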